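/- Let n ≥ 2 be even and index the vertices of K_n by elements of Z/nZ as a_0, …, a_{n−1}. For each i ∈ {0, 1, …, (n−2)/2}, let p_i be the sequence of vertices (b_0, b_1, …, b_{n−1}) with b_k = a_{i + (−1)^k · ⌈k/2⌉} (indices mod n), i.e., p_i = (a_i, a_{i−1}, a_{i+1}, a_{i−2}, a_{i+2}, …, a_{i−n/2}). Then each p_i is a Hamiltonian path of K_n, for distinct i ≠ j the paths p_i and p_j have no edge in common, and the union of the edge sets of p_0, …, p_{(n−2)/2} is the entire edge set of K_n. -/

import Mathlib

/-!
Write `b i k = i + zigzag n k`. The offsets `zigzag n k`, `k < n`, are `0, -1, 1, -2, …, -n/2`,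
pairwise distinct mod `n`, so every `p_i` is Hamiltonian. The edge `{b i k, b i (k+1)}` has
endpoint sum `2i - 1` or `2i` according to the parity of `k`; as `n` is even, `2` is not a unit
and this sum determines `i < n/2`, so distinct paths share no edge. Its endpoint difference is
`±(k+1)`, so every edge `{x, y}` lies on the path started at some `c : ZMod n`; and since
`n/2 + zigzag n (n-1-k) = zigzag n k`, the path started at `c + n/2` is that path reversed, so
`c` can be taken in `{0, …, n/2 - 1}`.
-/

def zigzag (n k : ℕ) : ZMod n :=
  if Even k then ((k / 2 : ℕ) : ZMod n) else -(((k + 1) / 2 : ℕ) : ZMod n)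

lemma ZMod.natCast_injOn_Iio (n : ℕ) : Set.InjOn (Nat.cast : ℕ → ZMod n) (Set.Iio n) :=
  fun _ ha _ hb h => ((ZMod.natCast_eq_natCast_iff _ _ _).mp h).eq_of_lt_of_lt ha hb

lemma ZMod.natCast_ne_zero_of_pos_of_lt {n a : ℕ} (h0 : 0 < a) (h : a < n) :
    (a : ZMod n) ≠ 0 := fun h' =>
  h0.ne' (Nat.eq_zero_of_dvd_of_lt ((ZMod.natCast_eq_zero_iff _ _).mp h') h)

lemma ZMod.two_mul_ne_one {n : ℕ} (hn : Even n) (a : ZMod n) : 2 * a ≠ 1 := by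
  intro h
  have h2 := congrArg (ZMod.castHom (even_iff_two_dvd.mp hn) (ZMod 2)) h
  rw [map_mul, map_one, map_ofNat, show (2 : ZMod 2) = 0 from rfl, zero_mul] at h2
  exact zero_ne_one h2

@[simp]
lemma zigzag_two_mul (n r : ℕ) : zigzag n (2 * r) = r := by
  simp [zigzag]

@[simp]
lemma zigzag_two_mul_add_one (n r : ℕ) : zigzag n (2 * r + 1) = -(r + 1) := by
  simp [zigzag, show (2 * r + 1 + 1) / 2 = r + 1 by omega]

lemma zigzag_injOn_Iio (n : ℕ) : Set.InjOn (zigzag n) (Set.Iio n) := by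
  have key : ∀ r s : ℕ, 2 * r < n → 2 * s + 1 < n →
      zigzag n (2 * r) ≠ zigzag n (2 * s + 1) := by
    intro r s hr hs h
    refine ZMod.natCast_ne_zero_of_pos_of_lt (n := n) (a := r + s + 1) (by omega) (by omega) ?_
    push_cast
    simp only [zigzag_two_mul, zigzag_two_mul_add_one] at h
    linear_combination h
  intro k (hk : k < n) k' (hk' : k' < n) h
  obtain ⟨r, rfl | rfl⟩ := Nat.even_or_odd' k <;> obtain ⟨s, rfl | rfl⟩ := Nat.even_or_odd' k'
  · simp only [zigzag_two_mul] at h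
    rw [ZMod.natCast_injOn_Iio n (show r < n by omega) (show s < n by omega) h]
  · exact absurd h (key r s hk hk')
  · exact absurd h.symm (key s r hk' hk)
  · simp only [zigzag_two_mul_add_one, neg_inj, add_left_inj] at h
    rw [ZMod.natCast_injOn_Iio n (show r < n by omega) (show s < n by omega) h]

lemma zigzag_add_zigzag_succ (n k : ℕ) :
    zigzag n k + zigzag n (k + 1) = if Even k then -1 else 0 := by
  obtain ⟨r, rfl | rfl⟩ := Nat.even_or_odd' k
  · simp
  · rw [show 2 * r + 1 + 1 = 2 * (r + 1) by ring]
    simp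

lemma zigzag_succ_sub_zigzag (n k : ℕ) :
    zigzag n (k + 1) - zigzag n k =
      if Even k then -((k + 1 : ℕ) : ZMod n) else ((k + 1 : ℕ) : ZMod n) := by
  obtain ⟨r, rfl | rfl⟩ := Nat.even_or_odd' k
  · simp only [zigzag_two_mul, zigzag_two_mul_add_one, even_two_mul, if_true]
    push_cast; ring
  · rw [show 2 * r + 1 + 1 = 2 * (r + 1) by ring]
    simp only [zigzag_two_mul, zigzag_two_mul_add_one, Nat.not_even_bit1, if_false]
    push_cast; ring

lemma half_add_zigzag {n : ℕ} (hn : Even n) {j k : ℕ} (hjk : j + k + 1 = n) :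
    ((n / 2 : ℕ) : ZMod n) + zigzag n j = zigzag n k := by
  obtain ⟨m, rfl⟩ := hn
  have hm : ((m + m : ℕ) : ZMod (m + m)) = 0 := ZMod.natCast_self _
  rw [show (m + m) / 2 = m by omega]
  obtain ⟨r, rfl | rfl⟩ := Nat.even_or_odd' k <;> obtain ⟨s, rfl | rfl⟩ := Nat.even_or_odd' j
  · omega
  · rw [show m = s + r + 1 by omega]; simp
  · rw [show m = s + r + 1 by omega] at hm ⊢
    simp only [zigzag_two_mul, zigzag_two_mul_add_one]
    push_cast at hm ⊢
    linear_combination hm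
  · omega

lemma zigzag_edge_half_add {n : ℕ} (hn : Even n) (c : ZMod n) {k : ℕ} (hk : k + 1 < n) :
    s(c + (n / 2 : ℕ) + zigzag n (n - 2 - k), c + (n / 2 : ℕ) + zigzag n (n - 2 - k + 1)) =
      s(c + zigzag n k, c + zigzag n (k + 1)) := by
  rw [add_assoc, add_assoc, half_add_zigzag hn (k := k + 1) (by omega),
    half_add_zigzag hn (k := k) (by omega), Sym2.eq_swap]

lemma exists_zigzag_edge_eq {n : ℕ} [NeZero n] {x y : ZMod n} (hxy : x ≠ y) :
    ∃ c : ZMod n, ∃ k, k + 1 < n ∧ s(x, y) = s(c + zigzag n k, c + zigzag n (k + 1)) := by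
  obtain ⟨k, hk⟩ :=
    Nat.exists_eq_add_one_of_ne_zero ((ZMod.val_ne_zero _).mpr (sub_ne_zero.mpr hxy.symm))
  have hlt : k + 1 < n := hk ▸ ZMod.val_lt _
  have hcast : ((k + 1 : ℕ) : ZMod n) = y - x := by rw [← hk, ZMod.natCast_zmod_val]
  have hstep := zigzag_succ_sub_zigzag n k
  split_ifs at hstep
  · refine ⟨y - zigzag n k, k, hlt, ?_⟩
    rw [Sym2.eq_swap]
    congr 1
    · ring
    · linear_combination -hstep + hcast
  · refine ⟨x - zigzag n k, k, hlt, ?_⟩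
    congr 1
    · ring
    · linear_combination -hstep - hcast

lemma ZMod.exists_lt_half_eq_or_eq_add_half {n : ℕ} [NeZero n] (hn : Even n) (c : ZMod n) :
    ∃ i < n / 2, (i : ZMod n) = c ∨ (i : ZMod n) = c + (n / 2 : ℕ) := by
  obtain ⟨m, rfl⟩ := hn
  rw [show (m + m) / 2 = m by omega]
  by_cases hc : c.val < m
  · exact ⟨c.val, hc, Or.inl (ZMod.natCast_zmod_val c)⟩
  · refine ⟨c.val - m, by have := ZMod.val_lt c; omega, Or.inr ?_⟩
    have hm : ((m + m : ℕ) : ZMod (m + m)) = 0 := ZMod.natCast_self _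
    rw [Nat.cast_sub (by omega), ZMod.natCast_zmod_val]
    push_cast at hm
    linear_combination -hm

lemma eq_of_zigzag_edge_eq {n : ℕ} (hn : Even n) {i j k k' : ℕ} (hi : 2 * i < n) (hj : 2 * j < n)
    (h : s((i : ZMod n) + zigzag n k, i + zigzag n (k + 1)) =
      s((j : ZMod n) + zigzag n k', j + zigzag n (k' + 1))) : i = j := by
  have hsum : 2 * (i : ZMod n) + (zigzag n k + zigzag n (k + 1)) =
      2 * (j : ZMod n) + (zigzag n k' + zigzag n (k' + 1)) := by
    rcases Sym2.eq_iff.mp h with ⟨h1, h2⟩ | ⟨h1, h2⟩ <;> linear_combination h1 + h2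
  rw [zigzag_add_zigzag_succ, zigzag_add_zigzag_succ] at hsum
  suffices ((2 * i : ℕ) : ZMod n) = ((2 * j : ℕ) : ZMod n) by
    have := ZMod.natCast_injOn_Iio n hi hj this
    omega
  push_cast
  split_ifs at hsum
  · linear_combination hsum
  · exact absurd (by linear_combination hsum) (ZMod.two_mul_ne_one hn ((i : ZMod n) - j))
  · exact absurd (by linear_combination -hsum) (ZMod.two_mul_ne_one hn ((j : ZMod n) - i))
  · linear_combination hsum

lemma bijective_add_zigzag {n : ℕ} [NeZero n] (c : ZMod n) :
    Function.Bijective (fun k : Fin n => c + zigzag n k) :=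
  (Fintype.bijective_iff_injective_and_card _).mpr
    ⟨fun k k' h => Fin.ext (zigzag_injOn_Iio n k.isLt k'.isLt (add_left_cancel h)), by simp⟩

/-- For even `n ≥ 2`, index the vertices of `K_n` by `ZMod n`.
For `i ∈ {0, …, (n-2)/2}` let `p_i` be the vertex sequence `b i 0, b i 1, …, b i (n-1)` with
`b i k = i + (-1)^k * ⌈k/2⌉`, i.e. `b i k = i + k/2` for even `k` and `b i k = i - (k+1)/2`
for odd `k`.  Then each `p_i` is a Hamiltonian path of `K_n` (consecutive vertices are
distinct, hence adjacent in `K_n`, and the sequence visits every vertex exactly once, i.e.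
`k ↦ b i k` is a bijection from `Fin n` to `ZMod n`), for `i ≠ j` the paths `p_i` and `p_j`
share no edge, and the edge sets of `p_0, …, p_{(n-2)/2}` together cover every edge of
`K_n`. -/
theorem stmt_1 (n : ℕ) (hn : 2 ≤ n) (hev : Even n)
    (b : ℕ → ℕ → ZMod n)
    (hb : ∀ i k, b i k =
      (i : ZMod n) +
        (if Even k then ((k / 2 : ℕ) : ZMod n) else -(((k + 1) / 2 : ℕ) : ZMod n))) :
    (∀ i ≤ (n - 2) / 2, ∀ k, k + 1 < n → b i k ≠ b i (k + 1)) ∧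
    (∀ i ≤ (n - 2) / 2, Function.Bijective (fun k : Fin n => b i (k : ℕ))) ∧
    (∀ i ≤ (n - 2) / 2, ∀ j ≤ (n - 2) / 2, i ≠ j →
      ∀ k k' : ℕ, k + 1 < n → k' + 1 < n →
        s(b i k, b i (k + 1)) ≠ s(b j k', b j (k' + 1))) ∧
    (∀ x y : ZMod n, x ≠ y →
      ∃ i ≤ (n - 2) / 2, ∃ k : ℕ, k + 1 < n ∧ s(x, y) = s(b i k, b i (k + 1))) := by
  have : NeZero n := ⟨by omega⟩
  obtain rfl : b = fun (i k : ℕ) => (i : ZMod n) + zigzag n k := funext₂ hb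
  refine ⟨fun i _ k hk h => ?_, fun i _ => bijective_add_zigzag _, ?_, fun x y hxy => ?_⟩
  · have := zigzag_injOn_Iio n (show k < n by omega) hk (add_left_cancel h)
    omega
  · exact fun i hi j hj hij k k' _ _ h => hij (eq_of_zigzag_edge_eq hev (by omega) (by omega) h)
  · obtain ⟨c, k, hk, hxy⟩ := exists_zigzag_edge_eq hxy
    obtain ⟨i, hi, rfl | hic⟩ := ZMod.exists_lt_half_eq_or_eq_add_half hev c
    · exact ⟨i, by omega, k, hk, hxy⟩
    · refine ⟨i, by omega, n - 2 - k, by omega, ?_⟩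
      dsimp only
      rw [hic, zigzag_edge_half_add hev c hk, hxy]
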